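/- arXiv:1711.04432 — 7 statements merged into one kernel-verified Lean document; each statement's English description precedes it below -/
import Mathlib

section
/- Let N ≥ 1, fix l ∈ {1,2,3}, and set J_{l−} = {j : h_{lj} = −1} and J_{l+} = {j : h_{lj} = 1}. Then equality Σ_{j=1}^4 N_j + Σ_{j ≠ j'} h_{lj} h_{lj'} N_{jj'} = | Σ_{j=1}^4 h_{lj} N_j | holds if and only if either (i) for every unit i = 1,…,N, Σ_{j ∈ J_{l+}} Y_i(z_j) − 1 ≤ Σ_{j ∈ J_{l−}} Y_i(z_j) ≤ Σ_{j ∈ J_{l+}} Y_i(z_j), or (ii) for every unit i = 1,…,N, Σ_{j ∈ J_{l+}} Y_i(z_j) ≤ Σ_{j ∈ J_{l−}} Y_i(z_j) ≤ Σ_{j ∈ J_{l+}} Y_i(z_j) + 1. -/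
open Finset

/-- Contrast vectors of the 2^2 design: rows are h_1, h_2, h_3. -/
def H : Fin 3 → Fin 4 → ℤ :=
  ![![-1, -1, 1, 1], ![-1, 1, -1, 1], ![1, -1, -1, 1]]

/-- N_j : number of units with Y_i(z_j) = 1. -/
def cnt1 {N : ℕ} (Y : Fin N → Fin 4 → ℕ) (j : Fin 4) : ℕ :=
  (univ.filter fun i => Y i j = 1).card

/-- N_{jj'} : number of units with Y_i(z_j) = Y_i(z_{j'}) = 1. -/
def cnt2 {N : ℕ} (Y : Fin N → Fin 4 → ℕ) (j j' : Fin 4) : ℕ :=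
  (univ.filter fun i => Y i j = 1 ∧ Y i j' = 1).card

/-- N_{j j' j''} : triple-intersection counts. -/
def cnt3 {N : ℕ} (Y : Fin N → Fin 4 → ℕ) (j j' j'' : Fin 4) : ℕ :=
  (univ.filter fun i => Y i j = 1 ∧ Y i j' = 1 ∧ Y i j'' = 1).card

/-- N_{1234} : quadruple-intersection count. -/
def cnt4 {N : ℕ} (Y : Fin N → Fin 4 → ℕ) : ℕ :=
  (univ.filter fun i => Y i 0 = 1 ∧ Y i 1 = 1 ∧ Y i 2 = 1 ∧ Y i 3 = 1).card

/-- Individual factorial effect τ_{il} = (1/2) h_l' Y_i. -/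
noncomputable def tauInd {N : ℕ} (Y : Fin N → Fin 4 → ℕ) (l : Fin 3) (i : Fin N) : ℝ :=
  (1 / 2) * ∑ j, (H l j : ℝ) * (Y i j : ℝ)

/-- Population factorial effect τ̄_l = (1/2) h_l' p, with p_j = N_j / N. -/
noncomputable def taubar {N : ℕ} (Y : Fin N → Fin 4 → ℕ) (l : Fin 3) : ℝ :=
  (1 / 2) * ∑ j, (H l j : ℝ) * ((cnt1 Y j : ℝ) / N)

/-- Variance of the individual factorial effects
    S²(τ̄_l) = (1/(N-1)) Σ_i (τ_{il} - τ̄_l)². -/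
noncomputable def S2 {N : ℕ} (Y : Fin N → Fin 4 → ℕ) (l : Fin 3) : ℝ :=
  (1 / ((N : ℝ) - 1)) * ∑ i, (tauInd Y l i - taubar Y l) ^ 2

/-- J_{l+} = {j : h_{lj} = 1}. -/
def Jplus (l : Fin 3) : Finset (Fin 4) := univ.filter fun j => H l j = 1

/-- J_{l-} = {j : h_{lj} = -1}. -/
def Jminus (l : Fin 3) : Finset (Fin 4) := univ.filter fun j => H l j = -1

lemma cnt1_cast {N : ℕ} (Y : Fin N → Fin 4 → ℕ) (hY : ∀ i j, Y i j ≤ 1) (j : Fin 4) :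
    (cnt1 Y j : ℤ) = ∑ i, (Y i j : ℤ) := by
  unfold cnt1
  rw [Finset.card_filter]
  push_cast
  refine Finset.sum_congr rfl fun i _ => ?_
  have := hY i j
  interval_cases h : Y i j <;> simp

lemma cnt2_cast {N : ℕ} (Y : Fin N → Fin 4 → ℕ) (hY : ∀ i j, Y i j ≤ 1) (j j' : Fin 4) :
    (cnt2 Y j j' : ℤ) = ∑ i, (Y i j : ℤ) * (Y i j' : ℤ) := by
  unfold cnt2
  rw [Finset.card_filter]
  push_cast
  refine Finset.sum_congr rfl fun i _ => ?_
  have h1 := hY i j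
  have h2 := hY i j'
  interval_cases h : Y i j <;> interval_cases h' : Y i j' <;> simp

lemma key_sq (l : Fin 3) (y : Fin 4 → ℤ) (hy : ∀ j, y j = 0 ∨ y j = 1) :
    (∑ j, y j) + ∑ j, ∑ j' ∈ univ \ {j}, H l j * H l j' * (y j * y j')
      = (∑ j, H l j * y j) ^ 2 := by
  have hsq : ∀ j, y j ^ 2 = y j := by
    intro j; rcases hy j with h | h <;> rw [h] <;> ring
  have hs : ∀ j, (H l j) ^ 2 = 1 := by revert l; decide
  rw [Fin.sum_univ_four, Fin.sum_univ_four, Fin.sum_univ_four]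
  rw [show ((univ : Finset (Fin 4)) \ {0}) = {1,2,3} from by decide,
      show ((univ : Finset (Fin 4)) \ {1}) = {0,2,3} from by decide,
      show ((univ : Finset (Fin 4)) \ {2}) = {0,1,3} from by decide,
      show ((univ : Finset (Fin 4)) \ {3}) = {0,1,2} from by decide]
  repeat rw [Finset.sum_insert (by decide)]
  repeat rw [Finset.sum_singleton]
  linear_combination -(hsq 0) - (y 0)^2 * hs 0 - hsq 1 - (y 1)^2 * hs 1
    - hsq 2 - (y 2)^2 * hs 2 - hsq 3 - (y 3)^2 * hs 3

lemma split_pm (l : Fin 3) (f : Fin 4 → ℤ) :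
    ∑ j, H l j * f j = (∑ j ∈ Jplus l, f j) - ∑ j ∈ Jminus l, f j := by
  have hu : Jplus l ∪ Jminus l = univ := by fin_cases l <;> decide
  have hd : Disjoint (Jplus l) (Jminus l) := by fin_cases l <;> decide
  have h1 : ∑ j ∈ Jplus l, H l j * f j = ∑ j ∈ Jplus l, f j := by
    refine Finset.sum_congr rfl fun j hj => ?_
    rw [Jplus, Finset.mem_filter] at hj
    rw [hj.2, one_mul]
  have h2 : ∑ j ∈ Jminus l, H l j * f j = ∑ j ∈ Jminus l, -f j := by
    refine Finset.sum_congr rfl fun j hj => ?_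
    rw [Jminus, Finset.mem_filter] at hj
    rw [hj.2]; ring
  rw [show (univ : Finset (Fin 4)) = Jplus l ∪ Jminus l from hu.symm,
    Finset.sum_union hd, h1, h2, Finset.sum_neg_distrib, sub_eq_add_neg]

lemma core_lemma {N : ℕ} (d : Fin N → ℤ) :
    (∑ i, (d i) ^ 2 = |∑ i, d i|) ↔
      (∀ i, 0 ≤ d i ∧ d i ≤ 1) ∨ (∀ i, -1 ≤ d i ∧ d i ≤ 0) := by
  constructor
  · intro h
    have h1 : ∀ i ∈ (univ : Finset (Fin N)), |d i| ≤ (d i) ^ 2 := by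
      intro i _
      have ha := abs_nonneg (d i)
      have hsq := sq_abs (d i)
      rcases (by omega : |d i| = 0 ∨ 1 ≤ |d i|) with h0 | h0
      · rw [h0]; positivity
      · nlinarith
    have h2 : ∑ i, |d i| ≤ ∑ i, (d i) ^ 2 := Finset.sum_le_sum h1
    have h3 : |∑ i, d i| ≤ ∑ i, |d i| := Finset.abs_sum_le_sum_abs _ _
    have heq1 : ∑ i, |d i| = ∑ i, (d i) ^ 2 := le_antisymm h2 (by omega)
    have heq2 : |∑ i, d i| = ∑ i, |d i| := by omega
    have hterm : ∀ i ∈ (univ : Finset (Fin N)), |d i| = (d i) ^ 2 :=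
      (Finset.sum_eq_sum_iff_of_le h1).mp heq1
    have hone : ∀ i, |d i| ≤ 1 := by
      intro i
      have hi := hterm i (mem_univ i)
      have ha := abs_nonneg (d i)
      have hsq := sq_abs (d i)
      by_contra hc
      push_neg at hc
      nlinarith
    by_cases hp : ∀ i, 0 ≤ d i
    · left; exact fun i => ⟨hp i, (abs_le.mp (hone i)).2⟩
    · right
      push_neg at hp
      obtain ⟨i, hi⟩ := hp
      intro k
      refine ⟨(abs_le.mp (hone k)).1, ?_⟩
      by_contra hk
      push_neg at hk
      have hik : i ≠ k := by intro he; rw [he] at hi; omega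
      have hdi : d i = -1 := by have := abs_le.mp (hone i); omega
      have hdk : d k = 1 := by have := abs_le.mp (hone k); omega
      have hk' : k ∈ univ.erase i := by
        rw [Finset.mem_erase]; exact ⟨hik.symm, mem_univ k⟩
      have e1 : ∑ x, d x = d i + ∑ x ∈ univ.erase i, d x :=
        (Finset.add_sum_erase _ _ (mem_univ i)).symm
      have e2 : ∑ x ∈ univ.erase i, d x
          = d k + ∑ x ∈ (univ.erase i).erase k, d x :=
        (Finset.add_sum_erase _ _ hk').symm
      have e1' : ∑ x, |d x| = |d i| + ∑ x ∈ univ.erase i, |d x| :=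
        (Finset.add_sum_erase _ _ (mem_univ i)).symm
      have e2' : ∑ x ∈ univ.erase i, |d x|
          = |d k| + ∑ x ∈ (univ.erase i).erase k, |d x| :=
        (Finset.add_sum_erase _ _ hk').symm
      have habs : |∑ x ∈ (univ.erase i).erase k, d x|
          ≤ ∑ x ∈ (univ.erase i).erase k, |d x| := Finset.abs_sum_le_sum_abs _ _
      have hA : |∑ x, d x| = |∑ x ∈ (univ.erase i).erase k, d x| := by
        rw [e1, e2, hdi, hdk]
        congr 1
        ring
      have hB : ∑ x, |d x| = 2 + ∑ x ∈ (univ.erase i).erase k, |d x| := by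
        rw [e1', e2', hdi, hdk]
        norm_num
        ring
      omega
  · intro h
    rcases h with h | h
    · have hc : ∀ i ∈ (univ : Finset (Fin N)), (d i) ^ 2 = d i := by
        intro i _
        rcases (by have := h i; omega : d i = 0 ∨ d i = 1) with h' | h' <;> rw [h'] <;> ring
      rw [Finset.sum_congr rfl hc,
        abs_of_nonneg (Finset.sum_nonneg fun i _ => (h i).1)]
    · have hc : ∀ i ∈ (univ : Finset (Fin N)), (d i) ^ 2 = -(d i) := by
        intro i _
        rcases (by have := h i; omega : d i = 0 ∨ d i = -1) with h' | h' <;> rw [h'] <;> ring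
      rw [Finset.sum_congr rfl hc, Finset.sum_neg_distrib,
        abs_of_nonpos (Finset.sum_nonpos fun i _ => (h i).2)]

theorem stmt3 (N : ℕ) (hN : 1 ≤ N) (l : Fin 3)
    (Y : Fin N → Fin 4 → ℕ) (hY : ∀ i j, Y i j ≤ 1) :
    ((∑ j, (cnt1 Y j : ℤ)) +
        (∑ j, ∑ j' ∈ univ \ {j}, H l j * H l j' * (cnt2 Y j j' : ℤ))
      = |∑ j, H l j * (cnt1 Y j : ℤ)|) ↔
    ((∀ i : Fin N, (∑ j ∈ Jplus l, (Y i j : ℤ)) - 1 ≤ ∑ j ∈ Jminus l, (Y i j : ℤ) ∧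
           (∑ j ∈ Jminus l, (Y i j : ℤ)) ≤ ∑ j ∈ Jplus l, (Y i j : ℤ)) ∨
     (∀ i : Fin N, (∑ j ∈ Jplus l, (Y i j : ℤ)) ≤ ∑ j ∈ Jminus l, (Y i j : ℤ) ∧
           (∑ j ∈ Jminus l, (Y i j : ℤ)) ≤ (∑ j ∈ Jplus l, (Y i j : ℤ)) + 1)) := by
  set d : Fin N → ℤ := fun i => ∑ j, H l j * (Y i j : ℤ) with hd
  have hbin : ∀ i j, ((Y i j : ℤ) = 0 ∨ (Y i j : ℤ) = 1) := by
    intro i j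
    have := hY i j
    omega
  have hL : (∑ j, (cnt1 Y j : ℤ)) +
      (∑ j, ∑ j' ∈ univ \ {j}, H l j * H l j' * (cnt2 Y j j' : ℤ))
      = ∑ i, (d i) ^ 2 := by
    simp_rw [cnt1_cast Y hY, cnt2_cast Y hY, Finset.mul_sum]
    rw [Finset.sum_comm (f := fun j i => (Y i j : ℤ))]
    rw [show (∑ j : Fin 4, ∑ j' ∈ univ \ {j}, ∑ i : Fin N,
          H l j * H l j' * ((Y i j : ℤ) * (Y i j' : ℤ)))
        = ∑ i : Fin N, ∑ j : Fin 4, ∑ j' ∈ univ \ {j},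
          H l j * H l j' * ((Y i j : ℤ) * (Y i j' : ℤ)) from by
      rw [Finset.sum_comm]
      exact Finset.sum_congr rfl fun j _ => Finset.sum_comm]
    rw [← Finset.sum_add_distrib]
    exact Finset.sum_congr rfl fun i _ => key_sq l (fun j => (Y i j : ℤ)) (hbin i)
  have hR : ∑ j, H l j * (cnt1 Y j : ℤ) = ∑ i, d i := by
    simp_rw [cnt1_cast Y hY, Finset.mul_sum]
    rw [Finset.sum_comm]
  have hJ : ∀ i, (∑ j ∈ Jplus l, (Y i j : ℤ)) - (∑ j ∈ Jminus l, (Y i j : ℤ)) = d i :=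
    fun i => (split_pm l fun j => (Y i j : ℤ)).symm
  rw [hL, hR, core_lemma d]
  constructor
  · rintro (h | h)
    · left; intro i; have := h i; have := hJ i; omega
    · right; intro i; have := h i; have := hJ i; omega
  · rintro (h | h)
    · left; intro i; have := (h i).1; have := (h i).2; have := hJ i; omega
    · right; intro i; have := (h i).1; have := (h i).2; have := hJ i; omega
end

section
/- Let N ≥ 2 and fix l ∈ {1,2,3}. Then the variance of the individual factorial effects is bounded below by S²(τ̄_l) ≥ (N/(N−1)) · max{ |τ̄_l| (1/2 − |τ̄_l|), 0 }. -/
open Finset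

theorem stmt4 (N : ℕ) (hN : 2 ≤ N) (l : Fin 3)
    (Y : Fin N → Fin 4 → ℕ) (hY : ∀ i j, Y i j ≤ 1) :
    ((N : ℝ) / ((N : ℝ) - 1)) * max (|taubar Y l| * (1 / 2 - |taubar Y l|)) 0
      ≤ S2 Y l := by
  have hN2 : (2:ℝ) ≤ (N:ℝ) := by exact_mod_cast hN
  have hNpos : (0:ℝ) < N := by linarith
  have hNne : (N:ℝ) ≠ 0 := ne_of_gt hNpos
  have hden : (0:ℝ) < (N:ℝ) - 1 := by linarith
  have hcnt : ∀ j, ∑ i : Fin N, (Y i j : ℝ) = (cnt1 Y j : ℝ) := by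
    intro j
    have h : (∑ i : Fin N, Y i j) = cnt1 Y j := by
      unfold cnt1
      rw [Finset.card_filter]
      refine Finset.sum_congr rfl fun i _ => ?_
      rcases Nat.le_one_iff_eq_zero_or_eq_one.mp (hY i j) with h | h <;> simp [h]
    exact_mod_cast h
  have hsum : ∑ i, tauInd Y l i = (N : ℝ) * taubar Y l := by
    simp only [tauInd, taubar]
    rw [← Finset.mul_sum, Finset.sum_comm]
    rw [Finset.mul_sum, Finset.mul_sum, Finset.mul_sum]
    refine Finset.sum_congr rfl fun j _ => ?_
    rw [← Finset.mul_sum, hcnt j]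
    field_simp
  have hkey : ∀ i, |tauInd Y l i| / 2 ≤ (tauInd Y l i)^2 := by
    intro i
    obtain ⟨s, hs⟩ : ∃ s : ℤ, tauInd Y l i = (s:ℝ)/2 := by
      refine ⟨∑ j, H l j * (Y i j : ℤ), ?_⟩
      simp only [tauInd]
      push_cast
      ring
    have h1 : |(s:ℝ)| ≤ (s:ℝ)^2 := by
      have h2 : |s| ≤ s^2 := by
        have := Int.le_self_sq |s|
        rwa [sq_abs] at this
      calc |(s:ℝ)| = ((|s| : ℤ) : ℝ) := by push_cast; ring
        _ ≤ ((s^2 : ℤ) : ℝ) := by exact_mod_cast h2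
        _ = (s:ℝ)^2 := by push_cast; ring
    rw [hs, abs_div, abs_two]
    nlinarith [h1]
  have hexp : ∑ i, (tauInd Y l i - taubar Y l)^2
      = (∑ i, (tauInd Y l i)^2) - (N:ℝ) * (taubar Y l)^2 := by
    have h : ∀ i : Fin N, (tauInd Y l i - taubar Y l)^2
        = (tauInd Y l i)^2 - 2 * taubar Y l * tauInd Y l i + (taubar Y l)^2 :=
      fun i => by ring
    simp only [h]
    rw [Finset.sum_add_distrib, Finset.sum_sub_distrib, ← Finset.mul_sum, hsum,
      Finset.sum_const, Finset.card_univ, Fintype.card_fin, nsmul_eq_mul]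
    ring
  have habs : (N:ℝ) * |taubar Y l| ≤ ∑ i, |tauInd Y l i| := by
    calc (N:ℝ) * |taubar Y l| = |∑ i, tauInd Y l i| := by
          rw [hsum, abs_mul, Nat.abs_cast]
      _ ≤ ∑ i, |tauInd Y l i| := Finset.abs_sum_le_sum_abs _ _
  have hsq : (∑ i, |tauInd Y l i|) / 2 ≤ ∑ i, (tauInd Y l i)^2 := by
    rw [Finset.sum_div]
    exact Finset.sum_le_sum fun i _ => hkey i
  have hmain : (N:ℝ) * max (|taubar Y l| * (1/2 - |taubar Y l|)) 0
      ≤ ∑ i, (tauInd Y l i - taubar Y l)^2 := by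
    rcases max_cases (|taubar Y l| * (1/2 - |taubar Y l|)) 0 with ⟨hmax, _⟩ | ⟨hmax, _⟩
    · rw [hmax, hexp]
      have hT : (taubar Y l)^2 = |taubar Y l|^2 := (sq_abs _).symm
      nlinarith [habs, hsq]
    · rw [hmax, mul_zero]
      exact Finset.sum_nonneg fun i _ => sq_nonneg _
  unfold S2
  rw [div_mul_eq_mul_div, div_le_iff₀ hden]
  have h2 : (1 / ((N:ℝ) - 1) * ∑ i, (tauInd Y l i - taubar Y l)^2) * ((N:ℝ)-1)
      = ∑ i, (tauInd Y l i - taubar Y l)^2 := by field_simp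
  rw [h2]
  exact hmain
end

section
/- Let N ≥ 1. Then N_{13} + N_{14} + N_{23} + N_{24} ≤ N_1 + N_2 + N_{12} + N_{34}. -/
open Finset

theorem stmt7 (N : ℕ) (hN : 1 ≤ N)
    (Y : Fin N → Fin 4 → ℕ) (hY : ∀ i j, Y i j ≤ 1) :
    cnt2 Y 0 2 + cnt2 Y 0 3 + cnt2 Y 1 2 + cnt2 Y 1 3 ≤
      cnt1 Y 0 + cnt1 Y 1 + cnt2 Y 0 1 + cnt2 Y 2 3 := by
  simp only [cnt1, cnt2, Finset.card_filter]
  rw [← Finset.sum_add_distrib, ← Finset.sum_add_distrib, ← Finset.sum_add_distrib,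
    ← Finset.sum_add_distrib, ← Finset.sum_add_distrib, ← Finset.sum_add_distrib]
  apply Finset.sum_le_sum
  intro i _
  have h0 := hY i 0; have h1 := hY i 1; have h2 := hY i 2; have h3 := hY i 3
  interval_cases (Y i 0) <;> interval_cases (Y i 1) <;> interval_cases (Y i 2) <;>
    interval_cases (Y i 3) <;> simp
end

section
/- Let N ≥ 1. Then N_{13} + N_{14} + N_{23} + N_{24} ≤ N_3 + N_4 + N_{12} + N_{34}. -/
open Finset

theorem stmt8 (N : ℕ) (hN : 1 ≤ N)
    (Y : Fin N → Fin 4 → ℕ) (hY : ∀ i j, Y i j ≤ 1) :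
    cnt2 Y 0 2 + cnt2 Y 0 3 + cnt2 Y 1 2 + cnt2 Y 1 3 ≤
      cnt1 Y 2 + cnt1 Y 3 + cnt2 Y 0 1 + cnt2 Y 2 3 := by
  simp only [cnt1, cnt2, Finset.card_filter]
  rw [← Finset.sum_add_distrib, ← Finset.sum_add_distrib, ← Finset.sum_add_distrib,
    ← Finset.sum_add_distrib, ← Finset.sum_add_distrib, ← Finset.sum_add_distrib]
  apply Finset.sum_le_sum
  intro i _
  have h0 := hY i 0; have h1 := hY i 1; have h2 := hY i 2; have h3 := hY i 3
  interval_cases ha : Y i 0 <;> interval_cases hb : Y i 1 <;>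
    interval_cases hc : Y i 2 <;> interval_cases hd : Y i 3 <;> simp
end

section
/- Let N ≥ 1. Then equality N_{13} + N_{14} + N_{23} + N_{24} = N_1 + N_2 + N_{12} + N_{34} holds if and only if for every unit i = 1,…,N, Y_i(z_3) + Y_i(z_4) − 1 ≤ Y_i(z_1) + Y_i(z_2) ≤ Y_i(z_3) + Y_i(z_4). -/
open Finset

theorem stmt11 (N : ℕ) (hN : 1 ≤ N)
    (Y : Fin N → Fin 4 → ℕ) (hY : ∀ i j, Y i j ≤ 1) :
    cnt2 Y 0 2 + cnt2 Y 0 3 + cnt2 Y 1 2 + cnt2 Y 1 3 =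
        cnt1 Y 0 + cnt1 Y 1 + cnt2 Y 0 1 + cnt2 Y 2 3 ↔
      ∀ i : Fin N, (Y i 2 : ℤ) + Y i 3 - 1 ≤ (Y i 0 : ℤ) + Y i 1 ∧
        (Y i 0 : ℤ) + Y i 1 ≤ (Y i 2 : ℤ) + Y i 3 := by
  classical
  set F : Fin N → ℕ := fun i =>
    (if Y i 0 = 1 ∧ Y i 2 = 1 then 1 else 0) + (if Y i 0 = 1 ∧ Y i 3 = 1 then 1 else 0) +
    (if Y i 1 = 1 ∧ Y i 2 = 1 then 1 else 0) + (if Y i 1 = 1 ∧ Y i 3 = 1 then 1 else 0) with hF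
  set G : Fin N → ℕ := fun i =>
    (if Y i 0 = 1 then 1 else 0) + (if Y i 1 = 1 then 1 else 0) +
    (if Y i 0 = 1 ∧ Y i 1 = 1 then 1 else 0) + (if Y i 2 = 1 ∧ Y i 3 = 1 then 1 else 0) with hG
  have key : ∀ i : Fin N, F i ≤ G i ∧
      (F i = G i ↔ ((Y i 2 : ℤ) + Y i 3 - 1 ≤ (Y i 0 : ℤ) + Y i 1 ∧
        (Y i 0 : ℤ) + Y i 1 ≤ (Y i 2 : ℤ) + Y i 3)) := by
    intro i
    have h0 := hY i 0; have h1 := hY i 1; have h2 := hY i 2; have h3 := hY i 3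
    simp only [hF, hG]
    interval_cases (Y i 0) <;> interval_cases (Y i 1) <;> interval_cases (Y i 2) <;>
      interval_cases (Y i 3) <;> norm_num
  have hL : cnt2 Y 0 2 + cnt2 Y 0 3 + cnt2 Y 1 2 + cnt2 Y 1 3 = ∑ i, F i := by
    simp only [cnt2, Finset.card_filter, hF, Finset.sum_add_distrib]
  have hR : cnt1 Y 0 + cnt1 Y 1 + cnt2 Y 0 1 + cnt2 Y 2 3 = ∑ i, G i := by
    simp only [cnt1, cnt2, Finset.card_filter, hG, Finset.sum_add_distrib]
  rw [hL, hR]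
  constructor
  · intro h i
    have := (Finset.sum_eq_sum_iff_of_le (fun i _ => (key i).1)).1 h i (Finset.mem_univ i)
    exact (key i).2.1 this
  · intro h
    exact Finset.sum_congr rfl fun i _ => (key i).2.2 (h i)
end

section
/- Let N ≥ 1. Then equality N_{13} + N_{14} + N_{23} + N_{24} = N_3 + N_4 + N_{12} + N_{34} holds if and only if for every unit i = 1,…,N, Y_i(z_3) + Y_i(z_4) ≤ Y_i(z_1) + Y_i(z_2) ≤ Y_i(z_3) + Y_i(z_4) + 1. -/
open Finset

lemma unit_le (a b c d : ℕ) (ha : a ≤ 1) (hb : b ≤ 1) (hc : c ≤ 1) (hd : d ≤ 1) :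
    ((if a = 1 ∧ c = 1 then 1 else 0) + (if a = 1 ∧ d = 1 then 1 else 0) +
      (if b = 1 ∧ c = 1 then 1 else 0) + (if b = 1 ∧ d = 1 then 1 else 0) : ℕ) ≤
    (if c = 1 then 1 else 0) + (if d = 1 then 1 else 0) +
      (if a = 1 ∧ b = 1 then 1 else 0) + (if c = 1 ∧ d = 1 then 1 else 0) := by
  interval_cases a <;> interval_cases b <;> interval_cases c <;> interval_cases d <;> simp

lemma unit_eq (a b c d : ℕ) (ha : a ≤ 1) (hb : b ≤ 1) (hc : c ≤ 1) (hd : d ≤ 1) :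
    (((if a = 1 ∧ c = 1 then 1 else 0) + (if a = 1 ∧ d = 1 then 1 else 0) +
      (if b = 1 ∧ c = 1 then 1 else 0) + (if b = 1 ∧ d = 1 then 1 else 0) : ℕ) =
    (if c = 1 then 1 else 0) + (if d = 1 then 1 else 0) +
      (if a = 1 ∧ b = 1 then 1 else 0) + (if c = 1 ∧ d = 1 then 1 else 0)) ↔
    ((c : ℤ) + d ≤ (a : ℤ) + b ∧ (a : ℤ) + b ≤ (c : ℤ) + d + 1) := by
  interval_cases a <;> interval_cases b <;> interval_cases c <;> interval_cases d <;> simp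

theorem stmt12 (N : ℕ) (hN : 1 ≤ N)
    (Y : Fin N → Fin 4 → ℕ) (hY : ∀ i j, Y i j ≤ 1) :
    cnt2 Y 0 2 + cnt2 Y 0 3 + cnt2 Y 1 2 + cnt2 Y 1 3 =
        cnt1 Y 2 + cnt1 Y 3 + cnt2 Y 0 1 + cnt2 Y 2 3 ↔
      ∀ i : Fin N, (Y i 2 : ℤ) + Y i 3 ≤ (Y i 0 : ℤ) + Y i 1 ∧
        (Y i 0 : ℤ) + Y i 1 ≤ (Y i 2 : ℤ) + Y i 3 + 1 := by
  simp only [cnt1, cnt2, Finset.card_filter, ← Finset.sum_add_distrib]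
  rw [Finset.sum_eq_sum_iff_of_le
    (fun i _ => unit_le (Y i 0) (Y i 1) (Y i 2) (Y i 3) (hY i 0) (hY i 1) (hY i 2) (hY i 3))]
  exact ⟨fun h i => (unit_eq _ _ _ _ (hY i 0) (hY i 1) (hY i 2) (hY i 3)).mp (h i (mem_univ i)),
    fun h i _ => (unit_eq _ _ _ _ (hY i 0) (hY i 1) (hY i 2) (hY i 3)).mpr (h i)⟩
end

section
/- Under the completely randomized 2² factorial design with N ≥ 2, for each l ∈ {1,2,3} the sampling variance of the randomization-based estimator equals Var(τ̂_l) = (1/4) Σ_{j=1}^4 S_j² / n_j − S²(τ̄_l)/N, where S_j² = (N/(N−1)) p_j (1 − p_j) and the variance is taken over the uniform distribution on all treatment assignments with the prescribed group sizes n_1, n_2, n_3, n_4. -/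
open Finset

/-- All treatment assignments W : {1,…,N} → {1,2,3,4} with #W⁻¹(j) = n_j. -/
def assignments (N : ℕ) (n : Fin 4 → ℕ) : Finset (Fin N → Fin 4) :=
  univ.filter fun W => ∀ j, (univ.filter fun i => W i = j).card = n j

/-- Expectation over the uniform distribution on all assignments. -/
noncomputable def expec {N : ℕ} (n : Fin 4 → ℕ) (f : (Fin N → Fin 4) → ℝ) : ℝ :=
  (∑ W ∈ assignments N n, f W) / (assignments N n).card

/-- p̂_j = (1/n_j) Σ_{i : W(i) = j} Y_i(z_j). -/
noncomputable def phat {N : ℕ} (Y : Fin N → Fin 4 → ℕ) (n : Fin 4 → ℕ)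
    (W : Fin N → Fin 4) (j : Fin 4) : ℝ :=
  (∑ i ∈ univ.filter (fun i => W i = j), (Y i j : ℝ)) / n j

/-- Randomization-based estimator τ̂_l = (1/2) h_l' p̂. -/
noncomputable def tauhat {N : ℕ} (Y : Fin N → Fin 4 → ℕ) (n : Fin 4 → ℕ)
    (l : Fin 3) (W : Fin N → Fin 4) : ℝ :=
  (1 / 2) * ∑ j, (H l j : ℝ) * phat Y n W j


/-!
Since every assignment has group sizes n_j, τ̂_l − τ̄_l = ∑ i, a i (W i) is a sum over units of a
function of the unit's arm, with a i j = h_{lj} (Y_i(z_j) − p_j) / (2 n_j) and ∑ i, a i j = 0.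
The uniform law on assignments is invariant under permutations of the units, so
𝔼 f (W i) = ∑ j, n_j f j / N and, for i ≠ i', 𝔼 f (W i) g (W i') depends only on f and g; since
∑_{i'' ≠ i} g (W i'') = ∑ j, n_j g j − g (W i) is deterministic given W i, it equals
((∑ n_j f j)(∑ n_j g j) − ∑ n_j f j g j) / (N (N − 1)). Expanding the square, the centering
∑ i, a i j = 0 kills the off-diagonal sums and leaves Neyman's formula
∑ j, c_j² S_j² / n_j − S²(τ̄_l) / N with c_j = h_{lj} / 2, so c_j² = 1/4. For binary outcomes
∑ i, (Y_i(z_j) − p_j)² = N p_j (1 − p_j).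
-/

open scoped BigOperators

lemma sum_sub_expect {ι M : Type*} [Fintype ι] [AddCommGroup M] [Module ℚ≥0 M] (x : ι → M) :
    ∑ i, (x i - 𝔼 i', x i') = 0 := by
  rw [sum_sub_distrib, sum_const, card_univ, Fintype.card_smul_expect, sub_self]

lemma sum_sq_sub_expect_of_sq_eq_self {ι : Type*} [Fintype ι] (x : ι → ℝ)
    (hx : ∀ i, x i ^ 2 = x i) :
    ∑ i, (x i - 𝔼 i', x i') ^ 2 = Fintype.card ι * (𝔼 i, x i) * (1 - 𝔼 i, x i) := by
  have hsum : ∑ i, x i = Fintype.card ι * 𝔼 i, x i := by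
    rw [← nsmul_eq_mul, Fintype.card_smul_expect]
  have hexpand : ∀ i, (x i - 𝔼 i', x i') ^ 2 = (1 - 2 * 𝔼 i', x i') * x i + (𝔼 i', x i') ^ 2 :=
    fun i => by linear_combination hx i
  simp only [hexpand, sum_add_distrib, ← mul_sum, hsum, sum_const, card_univ, nsmul_eq_mul]
  ring

section CompletelyRandomizedDesign

variable {ι K : Type*} [Fintype ι] [DecidableEq ι] [Fintype K] [DecidableEq K]

def assignmentsOfSizes (ι : Type*) [Fintype ι] [DecidableEq ι] (n : K → ℕ) : Finset (ι → K) :=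
  univ.filter fun W => ∀ j, (univ.filter fun i => W i = j).card = n j

variable {n : K → ℕ}

@[simp]
lemma mem_assignmentsOfSizes {W : ι → K} :
    W ∈ assignmentsOfSizes ι n ↔ ∀ j, #{i | W i = j} = n j := by
  simp [assignmentsOfSizes]

namespace assignmentsOfSizes

lemma sum_apply_of_mem {M : Type*} [AddCommMonoid M] {W : ι → K}
    (hW : W ∈ assignmentsOfSizes ι n) (f : K → M) : ∑ i, f (W i) = ∑ j, n j • f j := by
  simp [← sum_fiberwise' univ W f, mem_assignmentsOfSizes.1 hW]

lemma nonempty (hn : ∑ j, n j = Fintype.card ι) : (assignmentsOfSizes ι n).Nonempty := by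
  obtain ⟨e⟩ : Nonempty (ι ≃ Σ j, Fin (n j)) := Fintype.card_eq.1 (by simp [hn])
  refine ⟨fun i => (e i).1, mem_assignmentsOfSizes.2 fun j => ?_⟩
  rw [card_filter, Equiv.sum_comp e (fun x => if x.1 = j then 1 else 0), Fintype.sum_sigma]
  simp [apply_ite]

lemma comp_perm_mem {W : ι → K} (hW : W ∈ assignmentsOfSizes ι n) (σ : Equiv.Perm ι) :
    W ∘ σ ∈ assignmentsOfSizes ι n := by
  simp only [mem_assignmentsOfSizes, card_filter, Function.comp_apply] at hW ⊢
  intro j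
  rw [Equiv.sum_comp σ (fun i => if W i = j then 1 else 0), hW]

lemma expect_comp_perm {M : Type*} [AddCommMonoid M] [Module ℚ≥0 M] (σ : Equiv.Perm ι)
    (F : (ι → K) → M) :
    𝔼 W ∈ assignmentsOfSizes ι n, F (W ∘ σ) = 𝔼 W ∈ assignmentsOfSizes ι n, F W :=
  expect_nbij' (· ∘ σ) (· ∘ σ.symm) (fun _ hW => comp_perm_mem hW σ)
    (fun _ hW => comp_perm_mem hW σ.symm)
    (fun _ _ => by simp [Function.comp_assoc]) (fun _ _ => by simp [Function.comp_assoc])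
    (fun _ _ => rfl)

lemma expect_apply (hn : ∑ j, n j = Fintype.card ι) (f : K → ℝ) (i : ι) :
    𝔼 W ∈ assignmentsOfSizes ι n, f (W i) = (∑ j, n j * f j) / Fintype.card ι := by
  have hsymm : ∀ i', 𝔼 W ∈ assignmentsOfSizes ι n, f (W i') =
      𝔼 W ∈ assignmentsOfSizes ι n, f (W i) := fun i' => by
    simpa using expect_comp_perm (n := n) (Equiv.swap i i') (fun W => f (W i))
  have htotal : ∑ i', 𝔼 W ∈ assignmentsOfSizes ι n, f (W i') = ∑ j, n j * f j := by
    rw [← expect_sum_comm, expect_congr rfl fun W hW => sum_apply_of_mem hW f,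
      expect_const (nonempty hn)]
    simp
  have : Nonempty ι := ⟨i⟩
  rw [eq_div_iff (by simp), ← htotal]
  simp [hsymm, mul_comm]

lemma expect_apply_mul_apply (hn : ∑ j, n j = Fintype.card ι) (f g : K → ℝ) {i i' : ι}
    (hi : i ≠ i') :
    𝔼 W ∈ assignmentsOfSizes ι n, f (W i) * g (W i') =
      ((∑ j, n j * f j) * (∑ j, n j * g j) - ∑ j, n j * (f j * g j)) /
        (Fintype.card ι * (Fintype.card ι - 1)) := by
  have hsymm : ∀ i'' ∈ univ.erase i, 𝔼 W ∈ assignmentsOfSizes ι n, f (W i) * g (W i'') =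
      𝔼 W ∈ assignmentsOfSizes ι n, f (W i) * g (W i') := fun i'' hi'' => by
    simpa [Equiv.swap_apply_of_ne_of_ne hi (ne_of_mem_erase hi'').symm] using
      expect_comp_perm (n := n) (Equiv.swap i' i'') (fun W => f (W i) * g (W i'))
  have htotal : ∑ i'' ∈ univ.erase i, 𝔼 W ∈ assignmentsOfSizes ι n, f (W i) * g (W i'') =
      ((∑ j, n j * f j) * (∑ j, n j * g j) - ∑ j, n j * (f j * g j)) / Fintype.card ι := by
    rw [← expect_sum_comm]
    calc 𝔼 W ∈ assignmentsOfSizes ι n, ∑ i'' ∈ univ.erase i, f (W i) * g (W i'')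
        = 𝔼 W ∈ assignmentsOfSizes ι n, f (W i) * (∑ j, n j * g j - g (W i)) := by
          refine expect_congr rfl fun W hW => ?_
          rw [← mul_sum, sum_erase_eq_sub (mem_univ i), sum_apply_of_mem hW g]
          simp
      _ = _ := by
          rw [expect_apply hn (fun k => f k * (∑ j, n j * g j - g k))]
          simp only [mul_sub, sum_sub_distrib, ← sum_mul, ← mul_assoc]
  have hcard : 1 < Fintype.card ι := Fintype.one_lt_card_iff.2 ⟨i, i', hi⟩
  have hcard' : (1 : ℝ) < Fintype.card ι := by exact_mod_cast hcard
  rw [sum_congr rfl hsymm, sum_const, card_erase_of_mem (mem_univ i), card_univ, nsmul_eq_mul,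
    Nat.cast_sub hcard.le, Nat.cast_one] at htotal
  rw [← div_div, eq_div_iff (by linarith), mul_comm, htotal]

lemma expect_sq_sum_apply (hn : ∑ j, n j = Fintype.card ι) (hN : 1 < Fintype.card ι)
    (a : ι → K → ℝ) (ha : ∀ j, ∑ i, a i j = 0) :
    𝔼 W ∈ assignmentsOfSizes ι n, (∑ i, a i (W i)) ^ 2 =
      (∑ i, ∑ j, n j * a i j ^ 2) / (Fintype.card ι - 1) -
        (∑ i, (∑ j, n j * a i j) ^ 2) / (Fintype.card ι * (Fintype.card ι - 1)) := by
  have hN' : (1 : ℝ) < Fintype.card ι := by exact_mod_cast hN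
  set N : ℝ := (Fintype.card ι : ℝ)
  -- the off-diagonal moment formula, extended to the diagonal so that its rows sum to zero
  let P : ι → ι → ℝ := fun i i' =>
    ((∑ j, n j * a i j) * (∑ j, n j * a i' j) - ∑ j, n j * (a i j * a i' j)) / (N * (N - 1))
  have hpair : ∀ i i', 𝔼 W ∈ assignmentsOfSizes ι n, a i (W i) * a i' (W i') =
      if i = i' then (∑ j, n j * a i j ^ 2) / N else P i i' := by
    intro i i'
    split_ifs with h
    · subst h
      simpa [sq] using expect_apply hn (fun k => a i k * a i k) i
    · exact expect_apply_mul_apply hn (a i) (a i') h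
  have hrow : ∀ i, ∑ i', P i i' = 0 := by
    intro i
    simp only [P, ← sum_div, sum_sub_distrib, ← mul_sum, sum_comm (γ := ι), ha]
    simp
  have hN1 : N - 1 ≠ 0 := by linarith
  have hN0 : N ≠ 0 := by linarith
  calc 𝔼 W ∈ assignmentsOfSizes ι n, (∑ i, a i (W i)) ^ 2
      = ∑ i, ∑ i', 𝔼 W ∈ assignmentsOfSizes ι n, a i (W i) * a i' (W i') := by
        simp only [sq, sum_mul_sum, expect_sum_comm]
    _ = ∑ i, ((∑ j, n j * a i j ^ 2) / N - P i i) := by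
        refine sum_congr rfl fun i _ => ?_
        have hP := add_sum_erase univ (P i) (mem_univ i)
        rw [hrow i] at hP
        rw [sum_congr rfl fun i' _ => hpair i i', ← add_sum_erase _ _ (mem_univ i), if_pos rfl,
          sum_congr rfl fun i' hi' => if_neg (ne_of_mem_erase hi').symm]
        linarith
    _ = _ := by
        simp only [P, sum_sub_distrib, ← sum_div]
        field_simp
        ring

end assignmentsOfSizes

/-- `∑ j, c j * p̂ j` with `p̂ j` the mean outcome of arm `j`, written as a sum over units. -/
noncomputable def contrastEstimator (n : K → ℕ) (c : K → ℝ) (y : ι → K → ℝ) (W : ι → K) : ℝ :=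
  ∑ i, c (W i) * y i (W i) / n (W i)

lemma expect_contrastEstimator (hn : ∑ j, n j = Fintype.card ι) (hpos : ∀ j, n j ≠ 0)
    (c : K → ℝ) (y : ι → K → ℝ) :
    𝔼 W ∈ assignmentsOfSizes ι n, contrastEstimator n c y W = ∑ j, c j * 𝔼 i, y i j := by
  simp only [contrastEstimator, expect_sum_comm]
  refine (sum_congr rfl fun i _ =>
    assignmentsOfSizes.expect_apply hn (fun k => c k * y i k / n k) i).trans ?_
  simp only [Fintype.expect_eq_sum_div_card, ← sum_div]
  rw [sum_comm, sum_div]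
  refine sum_congr rfl fun j _ => ?_
  rw [mul_div_assoc', mul_sum]
  congr 1
  refine sum_congr rfl fun i _ => ?_
  field_simp [hpos j]

lemma expect_sq_contrastEstimator_sub (hn : ∑ j, n j = Fintype.card ι) (hpos : ∀ j, n j ≠ 0)
    (hN : 1 < Fintype.card ι) (c : K → ℝ) (y : ι → K → ℝ) :
    𝔼 W ∈ assignmentsOfSizes ι n, (contrastEstimator n c y W - ∑ j, c j * 𝔼 i, y i j) ^ 2 =
      ∑ j, c j ^ 2 * (∑ i, (y i j - 𝔼 i', y i' j) ^ 2 / (Fintype.card ι - 1)) / n j -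
        (∑ i, (∑ j, c j * (y i j - 𝔼 i', y i' j)) ^ 2 / (Fintype.card ι - 1)) /
          Fintype.card ι := by
  set a : ι → K → ℝ := fun i j => c j * (y i j - 𝔼 i', y i' j) / n j with ha_def
  have hcenter : ∀ W ∈ assignmentsOfSizes ι n,
      contrastEstimator n c y W - ∑ j, c j * 𝔼 i, y i j = ∑ i, a i (W i) := by
    intro W hW
    have := assignmentsOfSizes.sum_apply_of_mem hW fun k => c k * (𝔼 i, y i k) / n k
    simp only [a, contrastEstimator, mul_sub, sub_div, sum_sub_distrib, this]
    congr 1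
    refine sum_congr rfl fun j _ => ?_
    rw [nsmul_eq_mul]
    field_simp [hpos j]
  have ha : ∀ j, ∑ i, a i j = 0 := fun j => by
    simp only [a, ← sum_div, ← mul_sum, sum_sub_expect, mul_zero, zero_div]
  rw [expect_congr rfl fun W hW => by rw [hcenter W hW],
    assignmentsOfSizes.expect_sq_sum_apply hn hN a ha]
  have hsq : ∀ i j, (n j : ℝ) * a i j ^ 2 = c j ^ 2 * (y i j - 𝔼 i', y i' j) ^ 2 / n j :=
    fun i j => by rw [ha_def]; field_simp [hpos j]
  have hlin : ∀ i j, (n j : ℝ) * a i j = c j * (y i j - 𝔼 i', y i' j) :=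
    fun i j => by rw [ha_def]; field_simp [hpos j]
  simp only [hsq, hlin]
  rw [sum_comm]
  congr 1
  · rw [sum_div]
    refine sum_congr rfl fun j _ => ?_
    rw [← sum_div, ← mul_sum, ← sum_div]
    ring
  · rw [← sum_div, div_div, mul_comm]

end CompletelyRandomizedDesign

lemma expec_eq_expect {N : ℕ} (n : Fin 4 → ℕ) (f : (Fin N → Fin 4) → ℝ) :
    expec n f = 𝔼 W ∈ assignmentsOfSizes (Fin N) n, f W := by
  have : assignments N n = assignmentsOfSizes (Fin N) n := by ext W; simp [assignments]
  rw [expect_eq_sum_div_card, ← this]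
  rfl

lemma tauhat_eq_contrastEstimator {N : ℕ} (Y : Fin N → Fin 4 → ℕ) (n : Fin 4 → ℕ) (l : Fin 3)
    (W : Fin N → Fin 4) :
    tauhat Y n l W = contrastEstimator n (fun j => H l j / 2) (fun i j => Y i j) W := by
  rw [tauhat, contrastEstimator, ← sum_fiberwise univ W, mul_sum]
  refine sum_congr rfl fun j _ => ?_
  rw [phat, ← mul_assoc, mul_div_assoc', mul_sum, sum_div]
  refine sum_congr rfl fun i hi => ?_
  rw [(mem_filter.1 hi).2]
  ring

lemma cnt1_div_eq_expect {N : ℕ} {Y : Fin N → Fin 4 → ℕ} (hY : ∀ i j, Y i j ≤ 1) (j : Fin 4) :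
    (cnt1 Y j : ℝ) / N = 𝔼 i, (Y i j : ℝ) := by
  rw [Fintype.expect_eq_sum_div_card, Fintype.card_fin, cnt1, card_filter, Nat.cast_sum]
  congr 1
  refine sum_congr rfl fun i _ => ?_
  rcases Nat.le_one_iff_eq_zero_or_eq_one.1 (hY i j) with h | h <;> simp [h]

lemma taubar_eq_sum_expect {N : ℕ} {Y : Fin N → Fin 4 → ℕ} (hY : ∀ i j, Y i j ≤ 1) (l : Fin 3) :
    taubar Y l = ∑ j, (H l j / 2 : ℝ) * 𝔼 i, (Y i j : ℝ) := by
  rw [taubar, mul_sum]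
  refine sum_congr rfl fun j _ => ?_
  rw [cnt1_div_eq_expect hY]
  ring

lemma S2_eq_sum_sq {N : ℕ} {Y : Fin N → Fin 4 → ℕ} (hY : ∀ i j, Y i j ≤ 1) (l : Fin 3) :
    S2 Y l = ∑ i, (∑ j, (H l j / 2 : ℝ) * (Y i j - 𝔼 i', (Y i' j : ℝ))) ^ 2 / (N - 1) := by
  rw [S2, ← sum_div, one_div_mul_eq_div]
  congr 1
  refine sum_congr rfl fun i _ => ?_
  rw [tauInd, taubar_eq_sum_expect hY, mul_sum, ← sum_sub_distrib]
  congr 1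
  refine sum_congr rfl fun j _ => ?_
  ring

lemma H_sq (l : Fin 3) (j : Fin 4) : (H l j : ℝ) ^ 2 = 1 := by
  have : ∀ l j, H l j ^ 2 = 1 := by decide
  exact_mod_cast this l j

theorem stmt14 (N : ℕ) (hN : 2 ≤ N) (n : Fin 4 → ℕ) (hn : ∀ j, 1 ≤ n j)
    (hsum : ∑ j, n j = N) (l : Fin 3)
    (Y : Fin N → Fin 4 → ℕ) (hY : ∀ i j, Y i j ≤ 1) :
    expec n (fun W => (tauhat Y n l W - expec n (tauhat Y n l)) ^ 2) =
      (1 / 4) * (∑ j, (((N : ℝ) / ((N : ℝ) - 1)) * ((cnt1 Y j : ℝ) / N) *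
        (1 - (cnt1 Y j : ℝ) / N)) / n j) - S2 Y l / N := by
  have hsizes : ∑ j, n j = Fintype.card (Fin N) := by rw [hsum, Fintype.card_fin]
  have hpos : ∀ j, n j ≠ 0 := fun j => Nat.one_le_iff_ne_zero.1 (hn j)
  have hN' : 1 < Fintype.card (Fin N) := by rw [Fintype.card_fin]; omega
  have hbinary : ∀ i j, (Y i j : ℝ) ^ 2 = Y i j := fun i j => by
    rcases Nat.le_one_iff_eq_zero_or_eq_one.1 (hY i j) with h | h <;> simp [h]
  have hmean : expec n (tauhat Y n l) = taubar Y l := by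
    simp only [expec_eq_expect, tauhat_eq_contrastEstimator]
    rw [expect_contrastEstimator hsizes hpos, taubar_eq_sum_expect hY]
  rw [hmean, expec_eq_expect]
  simp only [tauhat_eq_contrastEstimator]
  rw [taubar_eq_sum_expect hY, expect_sq_contrastEstimator_sub hsizes hpos hN', S2_eq_sum_sq hY,
    mul_sum]
  simp only [← sum_div, sum_sq_sub_expect_of_sq_eq_self _ (fun i => hbinary i _), div_pow, H_sq,
    cnt1_div_eq_expect hY, Fintype.card_fin]
  congr 1
  refine sum_congr rfl fun j _ => ?_
  ring
end
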